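/- arXiv:2603.10539 — 4 statements merged into one kernel-verified Lean document; each statement's English description precedes it below -/
import Mathlib

section
/- Let T be an infinitely splitting, normal ω₁-tree. Suppose α < ω₁, g is an automorphism of T_{≤α}, X is a finite subset of level T_{α+1} with unique drop-downs to α (i.e., distinct elements of X have distinct predecessors in T_α), and Y is a finite subset of T_{α+1} disjoint from X. Then there is an automorphism g' of T_{≤α+1} extending g such that (i) for all x, y ∈ X, g'(x) = y if and only if g(x↾α) = y↾α, and (ii) g'[Y] is disjoint from X ∪ Y. -/
noncomputable section

open Cardinal Ordinal Set

/-- The height of a node of a tree. -/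
noncomputable def treeHt {T : Type*} [PartialOrder T]
    (hwo : ∀ t : T, IsWellOrder {s : T // s < t} (fun a b => (a : T) < (b : T)))
    (t : T) : Ordinal :=
  @Ordinal.type {s : T // s < t} (fun a b => (a : T) < (b : T)) (hwo t)

/-- `ω₁` as an ordinal. -/
noncomputable def w1 : Ordinal := (Cardinal.aleph 1).ord

/-- `g'`, an automorphism of `T_{≤ α+1}`, extends `g`, an automorphism of `T_{≤ α}`. -/
def ExtendsSucc {T : Type*} [PartialOrder T]
    (hwo : ∀ t : T, IsWellOrder {s : T // s < t} (fun a b => (a : T) < (b : T)))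
    (α : Ordinal)
    (g : {t : T // treeHt hwo t ≤ α} ≃o {t : T // treeHt hwo t ≤ α})
    (g' : {t : T // treeHt hwo t ≤ α + 1} ≃o {t : T // treeHt hwo t ≤ α + 1}) : Prop :=
  ∀ u : {t : T // treeHt hwo t ≤ α},
    g' ⟨(u : T), u.2.trans (le_self_add : α ≤ α + 1)⟩ =
      ⟨((g u : {t : T // treeHt hwo t ≤ α}) : T), (g u).2.trans (le_self_add : α ≤ α + 1)⟩

/-!
Every node `t` of height `α + 1` has a unique predecessor `p t` of height `α`, and a node of
height `≤ α` lies below `t` iff it lies below `p t`. Hence any bijection `h` of level `α + 1` with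
`p ∘ h = g ∘ p` glues with `g` to an automorphism of `T_{≤α+1}`. Such an `h` is assembled from
bijections between the immediate successors of `u` and of `g u`, for `u` of height `α`: both sets
are countably infinite and each meets `X` in at most one point, so the bijection can send the
`X`-point above `u` to the `X`-point above `g u` and the finitely many points of `Y` above `u`
into the infinite set of successors of `g u` outside `X ∪ Y`.
-/

theorem exists_equiv_mapsTo {α β : Type*} (e : α ≃ β) {s : Set α} {c : Set β}
    (hs : s.Finite) (hc : c.Infinite) : ∃ e' : α ≃ β, MapsTo e' s c := by
  have : Infinite ↥c := hc.to_subtype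
  have : Infinite β := Set.infinite_univ_iff.1 (hc.mono (subset_univ c))
  have : Infinite α := e.infinite_iff.2 this
  have : Finite ↥s := hs.to_subtype
  obtain ⟨f⟩ : Nonempty (s ↪ c) :=
    (Function.Embedding.total s c).resolve_right fun ⟨f⟩ => isEmptyElim f
  obtain ⟨e', he'⟩ := Cardinal.extend_function_of_lt (f.trans (Function.Embedding.subtype c))
    (hs.lt_aleph0.trans_le (aleph0_le_mk α)) ⟨e⟩
  exact ⟨e', fun a ha => (he' ⟨a, ha⟩).symm ▸ (f ⟨a, ha⟩).2⟩

theorem exists_equiv_apply_eq_and_mapsTo {α β : Type*} (e : α ≃ β) {P s : Set α} {Q c : Set β}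
    (hP : P.Subsingleton) (hQ : Q.Subsingleton) (hPs : Disjoint P s) (hQc : Disjoint Q c)
    (hs : s.Finite) (hc : c.Infinite) :
    ∃ e' : α ≃ β, (∀ a ∈ P, ∀ b ∈ Q, e' a = b) ∧ MapsTo e' s c := by
  classical
  obtain ⟨e₀, he₀⟩ := exists_equiv_mapsTo e hs hc
  by_cases hPQ : P.Nonempty ∧ Q.Nonempty
  · obtain ⟨⟨a, ha⟩, ⟨b, hb⟩⟩ := hPQ
    -- neither `e₀ a` nor `b` lies in `e₀ '' s`, so the swap fixes that set pointwise
    refine ⟨e₀.trans (Equiv.swap (e₀ a) b), fun a' ha' b' hb' => ?_, fun x hx => ?_⟩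
    · rw [hP ha' ha, hQ hb' hb]
      simp
    · have hxa : e₀ x ≠ e₀ a := e₀.injective.ne (hPs.ne_of_mem ha hx).symm
      have hxb : e₀ x ≠ b := (hQc.ne_of_mem hb (he₀ hx)).symm
      simpa [Equiv.swap_apply_of_ne_of_ne hxa hxb] using he₀ hx
  · exact ⟨e₀, fun a ha b hb => (hPQ ⟨⟨a, ha⟩, ⟨b, hb⟩⟩).elim, he₀⟩

section Fiberwise

variable {L M I J : Type*} (p : L → I) (q : M → J) (e : I ≃ J)

def fiberwiseEquiv (φ : ∀ i, {t // p t = i} ≃ {t // q t = e i}) : L ≃ M :=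
  (Equiv.sigmaFiberEquiv p).symm.trans ((Equiv.sigmaCongr e φ).trans (Equiv.sigmaFiberEquiv q))

theorem fiberwiseEquiv_apply (φ : ∀ i, {t // p t = i} ≃ {t // q t = e i}) (t : L) :
    fiberwiseEquiv p q e φ t = φ (p t) ⟨t, rfl⟩ :=
  rfl

end Fiberwise

section Tree

variable {T : Type*} [PartialOrder T]
  {hwo : ∀ t : T, IsWellOrder {s : T // s < t} (fun a b => (a : T) < (b : T))}

theorem treeHt_eq_typein {s t : T} (h : s < t) :
    treeHt hwo s = @typein {x : T // x < t} (fun a b => (a : T) < (b : T)) (hwo t) ⟨s, h⟩ := by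
  have := hwo t
  rw [← type_subrel]
  exact RelIso.ordinalType_congr
    ⟨⟨fun x => ⟨⟨x.1, x.2.trans h⟩, x.2⟩, fun y => ⟨y.1.1, y.2⟩, fun _ => rfl, fun _ => rfl⟩,
      Iff.rfl⟩

theorem treeHt_strictMono : StrictMono (treeHt hwo) := fun s t h => by
  have := hwo t
  rw [treeHt_eq_typein h]
  exact typein_lt_type _ _

theorem exists_lt_treeHt_eq {t : T} {β : Ordinal} (hβ : β < treeHt hwo t) :
    ∃ s < t, treeHt hwo s = β := by
  have := hwo t
  let s := enum (fun a b : {x : T // x < t} => (a : T) < b) ⟨β, hβ⟩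
  exact ⟨s, s.2, by rw [treeHt_eq_typein s.2]; exact typein_enum _ _⟩

theorem le_iff_le_of_lt_of_treeHt_le {s p t : T} (hpt : p < t)
    (hs : treeHt hwo s ≤ treeHt hwo p) : s ≤ t ↔ s ≤ p := by
  refine ⟨fun hst => ?_, fun hsp => hsp.trans hpt.le⟩
  have hst : s < t :=
    hst.lt_of_ne (by rintro rfl; exact (hs.trans_lt (treeHt_strictMono hpt)).false)
  have := hwo t
  rcases trichotomous_of (fun a b : {x : T // x < t} => (a : T) < b) ⟨s, hst⟩ ⟨p, hpt⟩
    with h | h | h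
  · exact h.le
  · exact (congrArg Subtype.val h).le
  · exact absurd hs (treeHt_strictMono (hwo := hwo) h).not_ge

theorem eq_of_lt_of_lt_of_treeHt_eq {s p t : T} (hst : s < t) (hpt : p < t)
    (h : treeHt hwo s = treeHt hwo p) : s = p :=
  le_antisymm ((le_iff_le_of_lt_of_treeHt_le hpt h.le).1 hst.le)
    ((le_iff_le_of_lt_of_treeHt_le hst h.ge).1 hpt.le)

theorem treeHt_orderIso_apply {P Q : T → Prop} (hP : ∀ ⦃s t⦄, s < t → P t → P s)
    (hQ : ∀ ⦃s t⦄, s < t → Q t → Q s) (e : {t // P t} ≃o {t // Q t}) (u : {t // P t}) :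
    treeHt hwo (e u : T) = treeHt hwo (u : T) := by
  refine (RelIso.ordinalType_congr (r := fun a b : {s // s < (u : T)} => (a : T) < b)
    (s := fun a b : {s // s < (e u : T)} => (a : T) < b) ⟨⟨fun s => ⟨e ⟨s, hP s.2 u.2⟩, ?_⟩,
      fun s => ⟨e.symm ⟨s, hQ s.2 (e u).2⟩, ?_⟩, fun s => ?_, fun s => ?_⟩, ?_⟩).symm
  · exact e.lt_iff_lt.2 (show (⟨s, _⟩ : {t // P t}) < u from s.2)
  · simpa using e.symm.lt_iff_lt.2 (show (⟨s, _⟩ : {t // Q t}) < e u from s.2)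
  · simp
  · simp
  · intro a b
    exact e.lt_iff_lt

section Successor

variable {α : Ordinal}

theorem treeHt_eq_add_one_of_not_le {t : T} (h₁ : treeHt hwo t ≤ α + 1)
    (h₂ : ¬ treeHt hwo t ≤ α) : treeHt hwo t = α + 1 :=
  h₁.antisymm (Order.add_one_le_of_lt (not_le.1 h₂))

def succGlue (g : {t : T // treeHt hwo t ≤ α} ≃ {t : T // treeHt hwo t ≤ α})
    (h : {t : T // treeHt hwo t = α + 1} ≃ {t : T // treeHt hwo t = α + 1})
    (t : {t : T // treeHt hwo t ≤ α + 1}) : {t : T // treeHt hwo t ≤ α + 1} :=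
  if ht : treeHt hwo t ≤ α then ⟨g ⟨t, ht⟩, (g ⟨t, ht⟩).2.trans le_self_add⟩
  else ⟨h ⟨t, treeHt_eq_add_one_of_not_le t.2 ht⟩, (h _).2.le⟩

variable {g : {t : T // treeHt hwo t ≤ α} ≃ {t : T // treeHt hwo t ≤ α}}
  {h : {t : T // treeHt hwo t = α + 1} ≃ {t : T // treeHt hwo t = α + 1}}

theorem succGlue_of_le {t : {t : T // treeHt hwo t ≤ α + 1}} (ht : treeHt hwo t ≤ α) :
    (succGlue g h t : T) = g ⟨t, ht⟩ := by
  rw [succGlue, dif_pos ht]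

theorem succGlue_of_eq {t : {t : T // treeHt hwo t ≤ α + 1}} (ht : treeHt hwo t = α + 1) :
    (succGlue g h t : T) = h ⟨t, ht⟩ := by
  rw [succGlue, dif_neg (by simp [ht])]

theorem succGlue_symm_succGlue (t : {t : T // treeHt hwo t ≤ α + 1}) :
    succGlue g.symm h.symm (succGlue g h t) = t := by
  by_cases ht : treeHt hwo t ≤ α
  · have hgt : succGlue g h t = ⟨g ⟨t, ht⟩, (g _).2.trans le_self_add⟩ :=
      Subtype.ext (succGlue_of_le ht)
    rw [hgt]
    exact Subtype.ext ((succGlue_of_le (g _).2).trans (by simp))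
  · have ht' := treeHt_eq_add_one_of_not_le t.2 ht
    have hgt : succGlue g h t = ⟨h ⟨t, ht'⟩, (h _).2.le⟩ := Subtype.ext (succGlue_of_eq ht')
    rw [hgt]
    exact Subtype.ext ((succGlue_of_eq (h _).2).trans (by simp))

theorem monotone_succGlue (hg : Monotone g)
    (hgh : ∀ (s : {t : T // treeHt hwo t ≤ α}) (t : {t : T // treeHt hwo t = α + 1}),
      (s : T) ≤ t → (g s : T) ≤ h t) :
    Monotone (succGlue g h) := by
  intro a b (hab : (a : T) ≤ b)
  by_cases hb : treeHt hwo b ≤ α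
  · have ha : treeHt hwo a ≤ α := (treeHt_strictMono.monotone hab).trans hb
    rw [← Subtype.coe_le_coe, succGlue_of_le ha, succGlue_of_le hb]
    exact hg hab
  have hb' := treeHt_eq_add_one_of_not_le b.2 hb
  by_cases ha : treeHt hwo a ≤ α
  · rw [← Subtype.coe_le_coe, succGlue_of_le ha, succGlue_of_eq hb']
    exact hgh _ _ hab
  · have hab' : a = b := Subtype.ext <| hab.eq_of_not_lt fun hlt =>
      (treeHt_strictMono (hwo := hwo) hlt).ne ((treeHt_eq_add_one_of_not_le a.2 ha).trans hb'.symm)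
    rw [hab']

theorem exists_orderIso_extendsSucc (g : {t : T // treeHt hwo t ≤ α} ≃o {t : T // treeHt hwo t ≤ α})
    (h : {t : T // treeHt hwo t = α + 1} ≃ {t : T // treeHt hwo t = α + 1})
    (hgh : ∀ (s : {t : T // treeHt hwo t ≤ α}) (t : {t : T // treeHt hwo t = α + 1}),
      (s : T) ≤ t ↔ (g s : T) ≤ h t) :
    ∃ g' : {t : T // treeHt hwo t ≤ α + 1} ≃o {t : T // treeHt hwo t ≤ α + 1},
      ExtendsSucc hwo α g g' ∧
        ∀ t : {t : T // treeHt hwo t = α + 1}, (g' ⟨t, t.2.le⟩ : T) = h t := by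
  let e : {t : T // treeHt hwo t ≤ α + 1} ≃ {t : T // treeHt hwo t ≤ α + 1} :=
    ⟨succGlue g.toEquiv h, succGlue g.symm.toEquiv h.symm, succGlue_symm_succGlue,
      succGlue_symm_succGlue (g := g.symm.toEquiv) (h := h.symm)⟩
  have hmono := monotone_succGlue g.monotone fun s t => (hgh s t).1
  have hmono_symm : Monotone e.symm := monotone_succGlue g.symm.monotone fun s t hst => by
    simpa using (hgh (g.symm s) (h.symm t)).2 (by simpa using hst)
  exact ⟨e.toOrderIso hmono hmono_symm, fun u => Subtype.ext (succGlue_of_le u.2),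
    fun t => succGlue_of_eq t.2⟩

section Fibers

variable {p : {t : T // treeHt hwo t = α + 1} → {t : T // treeHt hwo t ≤ α}}
  (hp : ∀ t, (p t : T) < t) (hpα : ∀ t, treeHt hwo (p t : T) = α)
include hp hpα

theorem infinite_fiber
    (hsplit : ∀ t : T, {s : T | t < s ∧ treeHt hwo s = treeHt hwo t + 1}.Infinite)
    {u : {t : T // treeHt hwo t ≤ α}} (hu : treeHt hwo (u : T) = α) :
    Infinite {t // p t = u} := by
  have := (hsplit u).to_subtype
  refine Infinite.of_injective
    (fun s : {s : T | (u : T) < s ∧ treeHt hwo s = treeHt hwo (u : T) + 1} =>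
      ⟨⟨s, s.2.2.trans (by rw [hu])⟩, Subtype.ext ?_⟩) fun s s' h => ?_
  · exact eq_of_lt_of_lt_of_treeHt_eq (hp _) s.2.1 ((hpα _).trans hu.symm)
  · exact Subtype.ext (congrArg (fun t => ((t.1 : _) : T)) h)

theorem subsingleton_fiber_mem {X : Set T}
    (hXdrop : ∀ x ∈ X, ∀ y ∈ X, x ≠ y → ¬ ∃ u : T, treeHt hwo u = α ∧ u < x ∧ u < y)
    (w : {t : T // treeHt hwo t ≤ α}) :
    {a : {t // p t = w} | ((a : _) : T) ∈ X}.Subsingleton := by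
  intro a ha b hb
  by_contra hne
  refine hXdrop _ ha _ hb (fun h => hne (Subtype.ext (Subtype.ext h))) ⟨p a, hpα a, hp a, ?_⟩
  rw [show p a = p b from a.2.trans b.2.symm]
  exact hp b

theorem exists_fiber_equiv (hcount : {t : T | treeHt hwo t = α + 1}.Countable)
    (hsplit : ∀ t : T, {s : T | t < s ∧ treeHt hwo s = treeHt hwo t + 1}.Infinite)
    (g : {t : T // treeHt hwo t ≤ α} ≃o {t : T // treeHt hwo t ≤ α})
    {X Y : Set T} (hXfin : X.Finite) (hYfin : Y.Finite)
    (hXdrop : ∀ x ∈ X, ∀ y ∈ X, x ≠ y → ¬ ∃ u : T, treeHt hwo u = α ∧ u < x ∧ u < y)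
    (hXY : Disjoint X Y) (u : {t : T // treeHt hwo t ≤ α}) :
    ∃ φ : {t // p t = u} ≃ {t // p t = g u},
      (∀ (x : {t // p t = u}) (y : {t // p t = g u}), ((x : _) : T) ∈ X → ((y : _) : T) ∈ X →
        φ x = y) ∧
      ∀ y : {t // p t = u}, ((y : _) : T) ∈ Y → ((φ y : _) : T) ∉ X ∪ Y := by
  have hlower : ∀ ⦃s t : T⦄, s < t → treeHt hwo t ≤ α → treeHt hwo s ≤ α :=
    fun s t hst ht => (treeHt_strictMono hst).le.trans ht
  have hgu : treeHt hwo (g u : T) = treeHt hwo (u : T) := treeHt_orderIso_apply hlower hlower g u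
  by_cases hu : treeHt hwo (u : T) = α
  · have := infinite_fiber hp hpα hsplit hu
    have := infinite_fiber hp hpα hsplit (hgu.trans hu)
    have : Countable {t : T // treeHt hwo t = α + 1} := hcount.to_subtype
    have hval (w) : Function.Injective fun a : {t // p t = w} => ((a : _) : T) :=
      Subtype.val_injective.comp Subtype.val_injective
    obtain ⟨φ, hφX, hφY⟩ := exists_equiv_apply_eq_and_mapsTo nonempty_equiv_of_countable.some
      (subsingleton_fiber_mem hp hpα hXdrop u) (subsingleton_fiber_mem hp hpα hXdrop (g u))
      (hXY.preimage _) (disjoint_compl_right.mono_left (preimage_mono subset_union_left))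
      (hYfin.preimage (hval u).injOn) ((hXfin.union hYfin).preimage (hval _).injOn).infinite_compl
    exact ⟨φ, fun x y hx hy => hφX x hx y hy, fun y hy => hφY hy⟩
  · have : IsEmpty {t // p t = u} := ⟨fun t => hu (t.2 ▸ hpα t)⟩
    have : IsEmpty {t // p t = g u} := ⟨fun t => hu (hgu ▸ t.2 ▸ hpα t)⟩
    exact ⟨Equiv.equivOfIsEmpty _ _, fun x => isEmptyElim x, fun y => isEmptyElim y⟩

theorem exists_equiv_level_succ (hcount : {t : T | treeHt hwo t = α + 1}.Countable)
    (hsplit : ∀ t : T, {s : T | t < s ∧ treeHt hwo s = treeHt hwo t + 1}.Infinite)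
    (g : {t : T // treeHt hwo t ≤ α} ≃o {t : T // treeHt hwo t ≤ α})
    {X Y : Set T} (hXfin : X.Finite) (hYfin : Y.Finite)
    (hXdrop : ∀ x ∈ X, ∀ y ∈ X, x ≠ y → ¬ ∃ u : T, treeHt hwo u = α ∧ u < x ∧ u < y)
    (hXY : Disjoint X Y) :
    ∃ h : {t : T // treeHt hwo t = α + 1} ≃ {t : T // treeHt hwo t = α + 1},
      (∀ t, p (h t) = g (p t)) ∧
      (∀ x y : {t : T // treeHt hwo t = α + 1}, (x : T) ∈ X → (y : T) ∈ X → p y = g (p x) →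
        h x = y) ∧
      ∀ y : {t : T // treeHt hwo t = α + 1}, (y : T) ∈ Y → (h y : T) ∉ X ∪ Y := by
  choose φ hφX hφY using exists_fiber_equiv hp hpα hcount hsplit g hXfin hYfin hXdrop hXY
  refine ⟨fiberwiseEquiv p p g.toEquiv φ, fun t => ?_, fun x y hx hy hxy => ?_, fun y hy => ?_⟩ <;>
    rw [fiberwiseEquiv_apply]
  · exact (φ (p t) ⟨t, rfl⟩).2
  · exact congrArg Subtype.val (hφX _ ⟨x, rfl⟩ ⟨y, hxy⟩ hx hy)
  · exact hφY _ ⟨y, rfl⟩ hy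

theorem le_iff_apply_le_of_pred_apply
    {g : {t : T // treeHt hwo t ≤ α} ≃o {t : T // treeHt hwo t ≤ α}}
    {h : {t : T // treeHt hwo t = α + 1} ≃ {t : T // treeHt hwo t = α + 1}}
    (hph : ∀ t, p (h t) = g (p t)) (s : {t : T // treeHt hwo t ≤ α})
    (t : {t : T // treeHt hwo t = α + 1}) : (s : T) ≤ t ↔ (g s : T) ≤ h t := by
  rw [le_iff_le_of_lt_of_treeHt_le (hp t) ((hpα t).trans_ge s.2),
    le_iff_le_of_lt_of_treeHt_le (hp (h t)) ((hpα (h t)).trans_ge (g s).2), hph]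
  exact g.le_iff_le.symm

theorem forall_lt_apply_eq_iff (g : {t : T // treeHt hwo t ≤ α} ≃o {t : T // treeHt hwo t ≤ α})
    (x y : {t : T // treeHt hwo t = α + 1}) :
    (∀ u v : {t : T // treeHt hwo t ≤ α}, (u : T) < x → treeHt hwo (u : T) = α →
      (v : T) < y → treeHt hwo (v : T) = α → g u = v) ↔ g (p x) = p y := by
  refine ⟨fun H => H _ _ (hp x) (hpα x) (hp y) (hpα y), fun H u v hu huα hv hvα => ?_⟩
  rwa [Subtype.ext (eq_of_lt_of_lt_of_treeHt_eq hu (hp x) (huα.trans (hpα x).symm)),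
    Subtype.ext (eq_of_lt_of_lt_of_treeHt_eq hv (hp y) (hvα.trans (hpα y).symm))]

end Fibers

end Successor

end Tree

theorem separated_automorphism_extension_general {T : Type*} [PartialOrder T]
    (hwo : ∀ t : T, IsWellOrder {s : T // s < t} (fun a b => (a : T) < (b : T)))
    -- `T` is an `ω₁`-tree:
    (hlevels_countable : ∀ α < w1, Set.Countable {t : T | treeHt hwo t = α})
    -- `T` is infinitely splitting:
    (hsplit : ∀ t : T, {s : T | t < s ∧ treeHt hwo s = treeHt hwo t + 1}.Infinite)
    (α : Ordinal) (hα : α < w1)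
    (g : {t : T // treeHt hwo t ≤ α} ≃o {t : T // treeHt hwo t ≤ α})
    (X Y : Set T) (hXfin : X.Finite) (hYfin : Y.Finite)
    (hX : ∀ x ∈ X, treeHt hwo x = α + 1) (hY : ∀ y ∈ Y, treeHt hwo y = α + 1)
    -- `X` has unique drop-downs to `α`:
    (hXdrop : ∀ x ∈ X, ∀ y ∈ X, x ≠ y →
      ¬ ∃ u : T, treeHt hwo u = α ∧ u < x ∧ u < y)
    (hXY : X ∩ Y = ∅) :
    ∃ g' : {t : T // treeHt hwo t ≤ α + 1} ≃o {t : T // treeHt hwo t ≤ α + 1},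
      ExtendsSucc hwo α g g' ∧
      -- (i) `X ↾ α` and `X` are `g'`-consistent:
      (∀ x, ∀ hx : x ∈ X, ∀ y, ∀ hy : y ∈ X,
        (g' ⟨x, (hX x hx).le⟩ = ⟨y, (hX y hy).le⟩ ↔
          (∀ u v : {t : T // treeHt hwo t ≤ α}, (u : T) < x → treeHt hwo (u : T) = α →
            (v : T) < y → treeHt hwo (v : T) = α → g u = v))) ∧
      -- (ii) `g'[Y] ∩ (X ∪ Y) = ∅`:
      (∀ y, ∀ hy : y ∈ Y, ((g' ⟨y, (hY y hy).le⟩ : {t : T // treeHt hwo t ≤ α + 1}) : T) ∉ X ∪ Y) := by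
  have hcount := hlevels_countable (α + 1)
    ((isSuccLimit_ord (aleph0_le_aleph 1)).succ_lt hα)
  obtain ⟨p, hp, hpα⟩ : ∃ p : {t : T // treeHt hwo t = α + 1} → {t : T // treeHt hwo t ≤ α},
      (∀ t, (p t : T) < t) ∧ ∀ t, treeHt hwo (p t : T) = α := by
    choose p hp hpα using fun t : {t : T // treeHt hwo t = α + 1} =>
      exists_lt_treeHt_eq (hwo := hwo) (t.2.symm ▸ Order.lt_add_one_iff.2 le_rfl : α < _)
    exact ⟨fun t => ⟨p t, (hpα t).le⟩, hp, hpα⟩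
  obtain ⟨h, hph, hhX, hhY⟩ := exists_equiv_level_succ hp hpα hcount hsplit g hXfin hYfin hXdrop
    (disjoint_iff_inter_eq_empty.2 hXY)
  obtain ⟨g', hg'g, hg'h⟩ :=
    exists_orderIso_extendsSucc g h (le_iff_apply_le_of_pred_apply hp hpα hph)
  refine ⟨g', hg'g, fun x hx y hy => ?_, fun y hy => hg'h ⟨y, hY y hy⟩ ▸ hhY _ hy⟩
  set x' : {t : T // treeHt hwo t = α + 1} := ⟨x, hX x hx⟩
  set y' : {t : T // treeHt hwo t = α + 1} := ⟨y, hX y hy⟩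
  rw [forall_lt_apply_eq_iff hp hpα g x' y', Subtype.ext_iff, hg'h x']
  refine ⟨fun hxy => ?_, fun hxy => by rw [hhX x' y' hx hy hxy.symm]⟩
  rw [← hph x', show h x' = y' from Subtype.ext hxy]

/-- Proposition 2.8 / `prop: 54`: Let `T` be an infinitely splitting, normal
`ω₁`-tree, `α < ω₁`, `g` an automorphism of `T_{≤α}`, `X ⊆ T_{α+1}` finite with unique
drop-downs to `α`, and `Y ⊆ T_{α+1}` finite and disjoint from `X`.  Then there is an
automorphism `g'` of `T_{≤α+1}` extending `g` such that (i) for `x, y ∈ X`, `g'(x) = y`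
iff `g(x↾α) = y↾α`, and (ii) `g'[Y] ∩ (X ∪ Y) = ∅`. -/
theorem separated_automorphism_extension {T : Type*} [PartialOrder T]
    (hwo : ∀ t : T, IsWellOrder {s : T // s < t} (fun a b => (a : T) < (b : T)))
    -- `T` is an `ω₁`-tree:
    (hht : ∀ t : T, treeHt hwo t < w1)
    (hlevels_countable : ∀ α < w1, Set.Countable {t : T | treeHt hwo t = α})
    (hlevels_ne : ∀ α < w1, ∃ t : T, treeHt hwo t = α)
    -- `T` is normal:
    (hnormal₁ : ∀ α β : Ordinal, α < β → β < w1 →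
      ∀ t : T, treeHt hwo t = α → ∃ s : T, treeHt hwo s = β ∧ t < s)
    (hnormal₂ : ∀ β < w1, Order.IsSuccLimit β → ∀ s t : T, treeHt hwo s = β →
      treeHt hwo t = β → {u : T | u < s} = {u : T | u < t} → s = t)
    -- `T` is infinitely splitting:
    (hsplit : ∀ t : T, {s : T | t < s ∧ treeHt hwo s = treeHt hwo t + 1}.Infinite)
    (α : Ordinal) (hα : α < w1)
    (g : {t : T // treeHt hwo t ≤ α} ≃o {t : T // treeHt hwo t ≤ α})
    (X Y : Set T) (hXfin : X.Finite) (hYfin : Y.Finite)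
    (hX : ∀ x ∈ X, treeHt hwo x = α + 1) (hY : ∀ y ∈ Y, treeHt hwo y = α + 1)
    -- `X` has unique drop-downs to `α`:
    (hXdrop : ∀ x ∈ X, ∀ y ∈ X, x ≠ y →
      ¬ ∃ u : T, treeHt hwo u = α ∧ u < x ∧ u < y)
    (hXY : X ∩ Y = ∅) :
    ∃ g' : {t : T // treeHt hwo t ≤ α + 1} ≃o {t : T // treeHt hwo t ≤ α + 1},
      ExtendsSucc hwo α g g' ∧
      -- (i) `X ↾ α` and `X` are `g'`-consistent:
      (∀ x, ∀ hx : x ∈ X, ∀ y, ∀ hy : y ∈ X,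
        (g' ⟨x, (hX x hx).le⟩ = ⟨y, (hX y hy).le⟩ ↔
          (∀ u v : {t : T // treeHt hwo t ≤ α}, (u : T) < x → treeHt hwo (u : T) = α →
            (v : T) < y → treeHt hwo (v : T) = α → g u = v))) ∧
      -- (ii) `g'[Y] ∩ (X ∪ Y) = ∅`:
      (∀ y, ∀ hy : y ∈ Y, ((g' ⟨y, (hY y hy).le⟩ : {t : T // treeHt hwo t ≤ α + 1}) : T) ∉ X ∪ Y) :=
  separated_automorphism_extension_general hwo hlevels_countable hsplit α hα g X Y hXfin hYfin hX hY
    hXdrop hXY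
end
end

section
/- Let λ be an uncountable ordinal and μ a regular cardinal such that μ > 2^{ω₁} and γ^ω < μ for all γ < μ. Then the forcing K_λ is μ-Knaster: every family of μ-many conditions contains a subfamily of size μ of pairwise compatible conditions. -/
noncomputable section

universe u

open Cardinal Ordinal Set

/-- `ω₁` as an ordinal. -/
noncomputable def omegaOne : Ordinal.{u} := (Cardinal.aleph 1).ord

/-- A node of `^{<ω₁}ω₁`: a function from a countable ordinal (its length) into `ω₁`,
coded canonically (value `0` beyond the length). -/
structure KNode : Type (u + 1) where
  len : Ordinal.{u}
  len_lt : len < omegaOne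
  val : Ordinal.{u} → Ordinal.{u}
  val_lt : ∀ o, val o < omegaOne
  val_eq_zero : ∀ o, ¬ o < len → val o = 0

namespace KNode

/-- The extension (end-extension) order on nodes. -/
def le (s t : KNode) : Prop := s.len ≤ t.len ∧ ∀ o < s.len, t.val o = s.val o

end KNode

/-- A condition of the forcing `K_λ`: a pair `(T, f)` where `T` is a normal, infinitely
splitting subtree of `^{<η+1}ω₁` of size at most `ω₁`, and `f` is a countable partial
function from `λ` to the top level `T ∩ ^{η}ω₁`. -/
structure KCond (lam : Ordinal.{u}) : Type (u + 1) where
  η : Ordinal.{u}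
  η_lt : η < omegaOne
  T : Set KNode.{u}
  T_le : ∀ s ∈ T, s.len ≤ η
  /-- `T` is a subtree: closed under restrictions (initial segments). -/
  T_closed : ∀ s ∈ T, ∀ u : KNode, u.le s → u ∈ T
  /-- `T` has size at most `ω₁`. -/
  T_card : Cardinal.mk T ≤ Cardinal.aleph 1
  /-- `T` is normal: every node extends to every higher level `≤ η`. -/
  T_normal : ∀ s ∈ T, ∀ β : Ordinal.{u}, s.len ≤ β → β ≤ η → ∃ t ∈ T, s.le t ∧ t.len = β
  /-- `T` is infinitely splitting. -/
  T_splitting : ∀ s ∈ T, s.len < η → {t ∈ T | s.le t ∧ t.len = s.len + 1}.Infinite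
  f : Ordinal.{u} → Option KNode.{u}
  f_dom : {a : Ordinal.{u} | f a ≠ none}.Countable
  f_spec : ∀ a n, f a = some n → a < lam ∧ n ∈ T ∧ n.len = η

namespace KCond

/-- The order on `K_λ`. -/
def le {lam : Ordinal.{u}} (q₁ q₀ : KCond lam) : Prop :=
  q₀.η ≤ q₁.η ∧
  {s ∈ q₁.T | s.len ≤ q₀.η} = q₀.T ∧
  (∀ a : Ordinal.{u}, q₀.f a ≠ none → q₁.f a ≠ none) ∧
  (∀ a n, q₀.f a = some n → ∃ m, q₁.f a = some m ∧ n.le m)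

end KCond

/-!
Three rounds of thinning, each keeping `μ` conditions. There are at most `2^ℵ₁ < μ` possible
pairs `(η, T)`, so `μ` conditions share one. Their countable domains contain a Δ-system of size
`μ` with a countable root `R`, and there are fewer than `μ` possible restrictions of `f` to `R`,
so `μ` of them agree on `R`. Two conditions with the same tree whose functions agree on the common
part of their domains have the union of the two functions as a common extension.

For the Δ-system lemma, regard the sets as subsets of `μ`. Unless some `β` and `R ⊆ β` have, for
every `γ ≥ β`, `μ` sets `E` with `E ∩ γ = R`, one finds for each `β` some `F β` such that fewer
than `μ` sets miss `[β, F β)` (there are fewer than `μ` candidate traces `R`, as `|β|^ℵ₀ < μ`).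
Iterating `F` along `ω₁` gives `ω₁` disjoint intervals which some countable set meets all of,
absurd. Given such `β` and `R`, a greedy recursion of length `μ` picks sets pairwise meeting in
exactly `R`.
-/

universe v

namespace Cardinal

variable {μ : Cardinal.{v}} {ι : Type v}

theorem mk_Iio_ord_toType_lt (w : μ.ord.ToType) : #(Iio w) < μ := by
  simpa using mk_Iio_lt w

theorem mk_lt_of_subset_of_ne {s t : Set ι} (hts : t ⊆ s) (hs : #s = μ)
    (ht : #t ≠ μ) : #t < μ :=
  ((mk_le_mk_of_subset hts).trans hs.le).lt_of_ne ht

theorem IsRegular.exists_forall_lt_of_mk_lt (hμ : μ.IsRegular) {s : Set μ.ord.ToType}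
    (hs : #s < μ) : ∃ b, ∀ x ∈ s, x < b := by
  have : ¬ IsCofinal s := fun h =>
    (Order.cof_le h).not_gt (by rwa [Ordinal.cof_toType, hμ.cof_ord])
  simpa [IsCofinal] using this

theorem IsRegular.exists_mk_inter_preimage_singleton_eq (hμ : μ.IsRegular) {β α : Type v}
    {s : Set β} (hs : #s = μ) (f : β → α) (hα : #α < μ) : ∃ a, #(s ∩ f ⁻¹' {a} : Set β) = μ := by
  by_contra! h
  have hU : #(⋃ a, s ∩ f ⁻¹' {a} : Set β) < μ :=
    (card_iUnion_lt_iff_forall_of_isRegular hμ hα).2 fun a =>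
      mk_lt_of_subset_of_ne inter_subset_left hs (h a)
  rw [← inter_iUnion, ← preimage_iUnion, iUnion_of_singleton, preimage_univ, inter_univ, hs] at hU
  exact hU.false

theorem mk_fun_lt_of_countable (hpow : ∀ γ < μ, γ ^ ℵ₀ < μ)
    {R β : Type v} [Countable R] [Nonempty β] (hβ : #β < μ) : #(R → β) < μ := by
  rw [← power_def]
  exact (power_le_power_left (mk_ne_zero β) mk_le_aleph0).trans_lt (hpow _ hβ)

theorem exists_seq_forall_image_Iio {I X : Type v} [LinearOrder I] [WellFoundedLT I]
    {κ : Cardinal.{v}} (hI : ∀ ξ : I, #(Iio ξ) < κ) {P : Set X → X → Prop}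
    (h : ∀ S : Set X, #S < κ → ∃ x, P S x) : ∃ x : I → X, ∀ ξ, P (x '' Iio ξ) (x ξ) := by
  choose g hg using h
  let x : I → X := wellFounded_lt.fix fun ξ prev =>
    g (range fun ζ : Iio ξ => prev ζ ζ.2) (mk_range_le.trans_lt (hI ξ))
  refine ⟨x, fun ξ => ?_⟩
  rw [image_eq_range, show x ξ = _ from wellFounded_lt.fix_eq _ ξ]
  exact hg _ _

theorem exists_subset_mk_eq_pairwise {s : Set ι} {r : ι → ι → Prop}
    (hr : Std.Symm r) (h : ∀ S ⊆ s, #S < μ → ∃ i ∈ s, i ∉ S ∧ ∀ j ∈ S, r j i) :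
    ∃ t ⊆ s, #t = μ ∧ t.Pairwise r := by
  obtain ⟨x, hx⟩ := exists_seq_forall_image_Iio (I := μ.ord.ToType) mk_Iio_ord_toType_lt
    (P := fun S i => i ∈ s ∧ i ∉ S ∧ ∀ j ∈ S ∩ s, r j i) fun S hS =>
      (h (S ∩ s) inter_subset_right ((mk_le_mk_of_subset inter_subset_left).trans_lt hS)).imp
        fun i ⟨his, hiS, hri⟩ => ⟨his, fun hi => hiS ⟨hi, his⟩, hri⟩
  have hlt : ∀ v w, v < w → x v ≠ x w ∧ r (x v) (x w) := fun v w hvw =>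
    ⟨fun heq => (hx w).2.1 (heq ▸ mem_image_of_mem x hvw),
      (hx w).2.2 _ ⟨mem_image_of_mem x hvw, (hx v).1⟩⟩
  have hinj : Function.Injective x := fun v w heq => by
    by_contra hvw
    rcases lt_or_gt_of_ne hvw with h | h
    · exact (hlt v w h).1 heq
    · exact (hlt w v h).1 heq.symm
  refine ⟨range x, range_subset_iff.2 fun w => (hx w).1, ?_, ?_⟩
  · rw [mk_range_eq x hinj, mk_ord_toType]
  · rintro _ ⟨v, rfl⟩ _ ⟨w, rfl⟩ hne
    rcases lt_or_gt_of_ne (fun h => hne (congrArg x h)) with h | h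
    · exact (hlt v w h).2
    · exact hr.symm _ _ (hlt w v h).2

theorem exists_mk_disjoint_Ico_eq (hμ : μ.IsRegular) (hμ₁ : ℵ₁ < μ) {s : Set ι} (hs : #s = μ)
    {E : ι → Set μ.ord.ToType} (hE : ∀ i ∈ s, (E i).Countable)
    (F : μ.ord.ToType → μ.ord.ToType) : ∃ β, #{i ∈ s | Disjoint (E i) (Ico β (F β))} = μ := by
  by_contra! hne
  obtain ⟨b, hb⟩ := exists_seq_forall_image_Iio (I := (ℵ₁ : Cardinal.{v}).ord.ToType) (κ := μ)
    (fun ξ => (mk_Iio_ord_toType_lt ξ).trans hμ₁) (P := fun S x => ∀ y ∈ S, F y < x)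
    fun S hS => (hμ.exists_forall_lt_of_mk_lt (mk_image_le.trans_lt hS)).imp
      fun x hx y hy => hx _ (mem_image_of_mem F hy)
  -- the intervals `[b ζ, F (b ζ))`, `ζ < ω₁`, lie one above the other
  obtain ⟨i, his, hi⟩ : ∃ i ∈ s, ∀ ζ, ¬ Disjoint (E i) (Ico (b ζ) (F (b ζ))) := by
    by_contra! h
    have hsub : s ⊆ ⋃ ζ, {i ∈ s | Disjoint (E i) (Ico (b ζ) (F (b ζ)))} := fun i hi =>
      mem_iUnion.2 ((h i hi).imp fun _ hζ => ⟨hi, hζ⟩)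
    have hlt := (card_iUnion_lt_iff_forall_of_isRegular hμ (by rwa [mk_ord_toType])).2
      fun ζ => mk_lt_of_subset_of_ne (sep_subset _ _) hs (hne (b ζ))
    exact ((mk_le_mk_of_subset hsub).trans_lt hlt).ne hs
  choose p hpE hpI using fun ζ => not_disjoint_iff.1 (hi ζ)
  have hp : StrictMono p := fun ζ ξ h =>
    (hpI ζ).2.trans ((hb ξ _ (mem_image_of_mem b h)).trans_le (hpI ξ).1)
  have : ℵ₁ ≤ ℵ₀ := calc
    ℵ₁ = #(ℵ₁ : Cardinal.{v}).ord.ToType := (mk_ord_toType _).symm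
    _ ≤ #(E i) := mk_le_of_injective (f := fun ζ => ⟨p ζ, hpE ζ⟩) fun ζ ξ h =>
      hp.injective (congrArg Subtype.val h)
    _ ≤ ℵ₀ := (hE i his).le_aleph0
  exact aleph0_lt_aleph_one.not_ge this

theorem exists_forall_mk_inter_Iio_eq (hμ : μ.IsRegular) (hμ₁ : ℵ₁ < μ)
    (hpow : ∀ γ < μ, γ ^ ℵ₀ < μ) {s : Set ι} (hs : #s = μ) {E : ι → Set μ.ord.ToType}
    (hE : ∀ i ∈ s, (E i).Countable) :
    ∃ β R, ∀ γ, β ≤ γ → #{i ∈ s | E i ∩ Iio γ = R} = μ := by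
  by_contra! h
  choose G hβG hG using h
  let traces (β : μ.ord.ToType) := {R : Set μ.ord.ToType // R ⊆ Iio β ∧ #R ≤ ℵ₀}
  have htraces (β) : #(traces β) < μ := (mk_bounded_subset_le _ _).trans_lt
    (hpow _ (max_lt (mk_Iio_ord_toType_lt β) (aleph0_lt_aleph_one.trans hμ₁)))
  choose F hF using fun β => hμ.exists_forall_lt_of_mk_lt
    (mk_range_le.trans_lt (htraces β) : #(range fun R : traces β => G β R.1) < μ)
  obtain ⟨β, hβ⟩ := exists_mk_disjoint_Ico_eq hμ hμ₁ hs hE F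
  -- if `E i` misses `[β, F β)`, its trace `R` below `β` is also its trace below `G β R < F β`
  have hsub : {i ∈ s | Disjoint (E i) (Ico β (F β))} ⊆
      ⋃ R : traces β, {i ∈ s | E i ∩ Iio (G β R.1) = R.1} := by
    rintro i ⟨his, hdisj⟩
    have hR : E i ∩ Iio β ⊆ Iio β ∧ #(E i ∩ Iio β : Set _) ≤ ℵ₀ :=
      ⟨inter_subset_right, ((hE i his).mono inter_subset_left).le_aleph0⟩
    have hGF := hF β _ (mem_range_self (⟨_, hR⟩ : traces β))
    refine mem_iUnion.2 ⟨⟨_, hR⟩, his, ?_⟩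
    ext x
    refine ⟨fun ⟨hx, hxG⟩ => ⟨hx, ?_⟩, fun ⟨hx, hxβ⟩ => ⟨hx, hxβ.trans_le (hβG _ _)⟩⟩
    by_contra hxβ
    exact disjoint_left.1 hdisj hx ⟨not_lt.1 hxβ, (mem_Iio.1 hxG).trans hGF⟩
  have hlt := (card_iUnion_lt_iff_forall_of_isRegular hμ (htraces β)).2
    fun R => mk_lt_of_subset_of_ne (sep_subset _ _) hs (hG β R.1)
  exact ((mk_le_mk_of_subset hsub).trans_lt hlt).ne hβ

theorem exists_deltaSystem_ord_toType (hμ : μ.IsRegular) (hμ₁ : ℵ₁ < μ)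
    (hpow : ∀ γ < μ, γ ^ ℵ₀ < μ) {s : Set ι} (hs : #s = μ) {E : ι → Set μ.ord.ToType}
    (hE : ∀ i ∈ s, (E i).Countable) :
    ∃ t ⊆ s, #t = μ ∧ ∃ R : Set μ.ord.ToType, R.Countable ∧
      t.Pairwise fun i j => E i ∩ E j = R := by
  obtain ⟨β, R, hR⟩ := exists_forall_mk_inter_Iio_eq hμ hμ₁ hpow hs hE
  have hβ := hR β le_rfl
  obtain ⟨⟨i₀, hi₀s, hi₀⟩⟩ := mk_ne_zero_iff.1 (hβ ▸ hμ.ne_zero)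
  have hRβ : R ⊆ Iio β := hi₀ ▸ inter_subset_right
  have hextend : ∀ S ⊆ {i ∈ s | E i ∩ Iio β = R}, #S < μ →
      ∃ i ∈ {i ∈ s | E i ∩ Iio β = R}, i ∉ S ∧ ∀ j ∈ S, E j ∩ E i = R := by
    intro S hSs hS
    -- take `γ ≥ β` above every `E j`, `j ∈ S`, and a new `i` whose trace below `γ` is `R`
    obtain ⟨γ', hγ'⟩ := hμ.exists_forall_lt_of_mk_lt (s := ⋃ j ∈ S, E j)
      ((card_biUnion_lt_iff_forall_of_isRegular hμ hS).2 fun j hj =>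
        (hE j (hSs hj).1).le_aleph0.trans_lt (aleph0_lt_aleph_one.trans hμ₁))
    set γ := max β γ'
    obtain ⟨i, ⟨his, hiγ⟩, hiS⟩ : ∃ i ∈ {i ∈ s | E i ∩ Iio γ = R}, i ∉ S := by
      by_contra! h
      exact ((mk_le_mk_of_subset h).trans_lt hS).ne (hR γ (le_max_left _ _))
    refine ⟨i, ⟨his, ?_⟩, hiS, fun j hj => ?_⟩
    · rw [← inter_eq_left.2 hRβ, ← hiγ, inter_assoc, Iio_inter_Iio,
        min_eq_right (le_max_left _ _)]
    · have hEj : E j ⊆ Iio γ := fun x hx =>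
        lt_max_of_lt_right (hγ' x (mem_biUnion hj hx))
      calc E j ∩ E i = E j ∩ (E i ∩ Iio γ) := by
            rw [← inter_assoc, inter_right_comm, inter_eq_left.2 hEj]
        _ = R := by rw [hiγ, inter_eq_right.2 ((hSs hj).2 ▸ inter_subset_left)]
  obtain ⟨t, hts, ht, hpair⟩ := exists_subset_mk_eq_pairwise (r := fun i j => E i ∩ E j = R)
    ⟨fun i j h => (inter_comm (E j) (E i)).trans h⟩ hextend
  exact ⟨t, hts.trans (sep_subset _ _), ht, R, hi₀ ▸ (hE i₀ hi₀s).mono inter_subset_left, hpair⟩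

theorem exists_deltaSystem (hμ : μ.IsRegular) (hμ₁ : ℵ₁ < μ) (hpow : ∀ γ < μ, γ ^ ℵ₀ < μ)
    {α : Type v} {s : Set ι} (hs : #s = μ) {E : ι → Set α} (hE : ∀ i ∈ s, (E i).Countable) :
    ∃ t ⊆ s, #t = μ ∧ ∃ R : Set α, R.Countable ∧ t.Pairwise fun i j => E i ∩ E j = R := by
  classical
  set U := ⋃ i ∈ s, E i
  have hEU : ∀ i ∈ s, E i ⊆ U := fun i hi => subset_biUnion_of_mem hi
  have hU : #U ≤ μ := (mk_biUnion_le E s).trans <| by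
    rw [hs]
    exact (mul_le_mul_right (ciSup_le' fun i : s => (hE i.1 i.2).le_aleph0) μ).trans
      (mul_aleph0_eq hμ.aleph0_le).le
  obtain ⟨e⟩ : Nonempty (U ↪ μ.ord.ToType) := by rwa [← le_def, mk_ord_toType]
  have : Nonempty μ.ord.ToType := mk_ne_zero_iff.1 (by rw [mk_ord_toType]; exact hμ.ne_zero)
  let φ : α → μ.ord.ToType := fun x => if hx : x ∈ U then e ⟨x, hx⟩ else Classical.arbitrary _
  have hφ : InjOn φ U := fun x hx y hy h =>
    congrArg Subtype.val (e.injective (by simpa only [φ, dif_pos hx, dif_pos hy] using h))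
  obtain ⟨t, hts, ht, R, hR, hpair⟩ := exists_deltaSystem_ord_toType hμ hμ₁ hpow hs
    (E := fun i => φ '' E i) fun i hi => (hE i hi).image φ
  refine ⟨t, hts, ht, φ ⁻¹' R ∩ U, ?_, fun i hi j hj hij => ?_⟩
  · exact (mapsTo_preimage φ R).mono_left inter_subset_left |>.countable_of_injOn
      (hφ.mono inter_subset_right) hR
  · rw [← hpair hi hj hij, ← hφ.image_inter (hEU i (hts hi)) (hEU j (hts hj)),
      hφ.preimage_image_inter (inter_subset_left.trans (hEU i (hts hi)))]

end Cardinal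

theorem KNode.le_refl (n : KNode.{u}) : n.le n := ⟨le_rfl, fun _ _ => rfl⟩

theorem mk_Iio_omegaOne : #(Iio omegaOne.{u}) = ℵ₁ := by
  rw [omegaOne, Cardinal.mk_Iio_ordinal, card_ord, lift_aleph]
  norm_num

theorem mk_KNode_le : #KNode.{u} ≤ 2 ^ ℵ₁ := by
  let code (n : KNode.{u}) : Iio omegaOne.{u} × (Iio omegaOne.{u} → Iio omegaOne.{u}) :=
    (⟨n.len, n.len_lt⟩, fun o => ⟨n.val o, n.val_lt o⟩)
  -- `val` vanishes beyond `len < ω₁`, so it is determined by its restriction to `ω₁`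
  have hcode : Function.Injective code := by
    rintro ⟨len, len_lt, val, val_lt, val_eq_zero⟩ ⟨len', len_lt', val', val_lt', val_eq_zero'⟩ h
    simp only [code, Prod.mk.injEq, funext_iff, Subtype.forall, mem_Iio] at h
    obtain rfl : len = len' := congrArg Subtype.val h.1
    obtain rfl : val = val' := funext fun o => by
      by_cases ho : o < omegaOne
      · exact congrArg Subtype.val (h.2 o ho)
      · rw [val_eq_zero o fun h => ho (h.trans len_lt),
          val_eq_zero' o fun h => ho (h.trans len_lt')]
    rfl
  calc #KNode.{u} ≤ #(Iio omegaOne.{u} × (Iio omegaOne.{u} → Iio omegaOne.{u})) :=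
        mk_le_of_injective hcode
    _ = ℵ₁ * ℵ₁ ^ ℵ₁ := by
        rw [mk_prod, Cardinal.lift_id, Cardinal.lift_id, ← power_def, mk_Iio_omegaOne]
    _ = 2 ^ ℵ₁ := by
        rw [power_self_eq (aleph0_le_aleph 1), mul_eq_right (aleph0_le_aleph 1 |>.trans
          (cantor _).le) (cantor _).le (aleph_pos 1).ne']

theorem mk_bounded_set_KNode_le : #{T : Set KNode.{u} // #T ≤ ℵ₁} ≤ 2 ^ ℵ₁ :=
  calc #{T : Set KNode.{u} // #T ≤ ℵ₁} ≤ (2 ^ ℵ₁) ^ ℵ₁ :=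
        (mk_bounded_set_le _ _).trans (power_le_power_right
          (max_le mk_KNode_le ((aleph0_le_aleph 1).trans (cantor _).le)))
    _ = 2 ^ ℵ₁ := by rw [← power_mul, mul_eq_self (aleph0_le_aleph 1)]

namespace KCond

variable {lam : Ordinal.{u}}

theorem le_of_extends {r p : KCond lam} (hη : r.η = p.η) (hT : r.T = p.T)
    (hf : ∀ a n, p.f a = some n → r.f a = some n) : r.le p := by
  refine ⟨hη.ge, ?_, fun a ha => ?_, fun a n h => ⟨n, hf a n h, n.le_refl⟩⟩
  · rw [hT]
    exact sep_eq_self_iff_mem_true.2 p.T_le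
  · obtain ⟨n, hn⟩ := Option.ne_none_iff_exists'.1 ha
    simp [hf a n hn]

theorem exists_le_le_of_agree {p q : KCond lam} (hη : p.η = q.η) (hT : p.T = q.T)
    (hf : ∀ a, p.f a ≠ none → q.f a ≠ none → p.f a = q.f a) :
    ∃ r : KCond lam, r.le p ∧ r.le q := by
  let r : KCond lam :=
    { p with
      f := fun a => (p.f a).or (q.f a)
      f_dom := (p.f_dom.union q.f_dom).mono fun a ha => by
        simpa [Option.or_eq_none_iff, or_iff_not_imp_left] using ha
      f_spec := fun a n h => by
        rcases Option.or_eq_some_iff.1 h with h | ⟨-, h⟩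
        · exact p.f_spec a n h
        · exact hT ▸ hη ▸ q.f_spec a n h }
  refine ⟨r, le_of_extends rfl rfl fun a n h => by simp [r, h],
    le_of_extends hη hT fun a n h => ?_⟩
  show (p.f a).or (q.f a) = some n
  cases hp : p.f a with
  | none => simpa using h
  | some m => rw [← hp, hf a (by simp [hp]) (by simp [h]), h, Option.some_or]

end KCond

theorem KCond.knaster_general (lam : Ordinal.{u})
    (μ : Cardinal.{u + 1}) (hreg : μ.IsRegular)
    (hμ₁ : (2 : Cardinal.{u + 1}) ^ (Cardinal.aleph 1) < μ)
    (hμ₂ : ∀ γ : Cardinal.{u + 1}, γ < μ → γ ^ (Cardinal.aleph 0) < μ)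
    (A : Set (KCond.{u} lam)) (hA : Cardinal.mk A = μ) :
    ∃ B ⊆ A, Cardinal.mk B = μ ∧
      ∀ p ∈ B, ∀ q ∈ B, ∃ r : KCond lam, r.le p ∧ r.le q := by
  have hℵ₁ : ℵ₁ < μ := (cantor _).trans hμ₁
  have hpow : ∀ γ < μ, γ ^ ℵ₀ < μ := by simpa using hμ₂
  let shape (p : KCond lam) : Iio omegaOne.{u} × {T : Set KNode.{u} // #T ≤ ℵ₁} :=
    (⟨p.η, p.η_lt⟩, ⟨p.T, p.T_card⟩)
  obtain ⟨σ, hσ⟩ := hreg.exists_mk_inter_preimage_singleton_eq hA shape <| by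
    rw [mk_prod, Cardinal.lift_id, Cardinal.lift_id, mk_Iio_omegaOne]
    exact mul_lt_of_lt hreg.aleph0_le hℵ₁ (mk_bounded_set_KNode_le.trans_lt hμ₁)
  obtain ⟨A₂, hA₂, hA₂μ, R, hR, hΔ⟩ := exists_deltaSystem hreg hℵ₁ hpow hσ
    (E := fun p : KCond lam => {a | p.f a ≠ none}) fun p _ => p.f_dom
  have : Countable R := hR.to_subtype
  obtain ⟨g, hg⟩ := hreg.exists_mk_inter_preimage_singleton_eq hA₂μ
    (fun (p : KCond lam) (a : R) => p.f a) <| mk_fun_lt_of_countable hpow <| by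
      rw [mk_option]
      exact add_lt_of_lt hreg.aleph0_le (mk_KNode_le.trans_lt hμ₁)
        (one_lt_aleph0.trans (aleph0_lt_aleph_one.trans hℵ₁))
  refine ⟨A₂ ∩ _ ⁻¹' {g}, inter_subset_left.trans (hA₂.trans inter_subset_left), hg, ?_⟩
  rintro p ⟨hpA₂, hpg⟩ q ⟨hqA₂, hqg⟩
  have hshape : shape p = shape q := (hA₂ hpA₂).2.trans (hA₂ hqA₂).2.symm
  simp only [shape, Prod.mk.injEq, Subtype.ext_iff] at hshape
  refine KCond.exists_le_le_of_agree hshape.1 hshape.2 fun a hpa hqa => ?_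
  obtain rfl | hpq := eq_or_ne p q
  · rfl
  have ha : a ∈ R := hΔ hpA₂ hqA₂ hpq ▸ ⟨hpa, hqa⟩
  exact congrFun (hpg.trans hqg.symm) ⟨a, ha⟩

/-- For an uncountable ordinal `λ` and a regular cardinal `μ` with
`μ > 2^{ω₁}` and `γ^ω < μ` for all `γ < μ`, the forcing `K_λ` is `μ`-Knaster: every
family of `μ`-many conditions contains a subfamily of size `μ` of pairwise compatible
conditions. -/
theorem KCond.knaster (lam : Ordinal.{u}) (hlam : omegaOne ≤ lam)
    (μ : Cardinal.{u + 1}) (hreg : μ.IsRegular)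
    (hμ₁ : (2 : Cardinal.{u + 1}) ^ (Cardinal.aleph 1) < μ)
    (hμ₂ : ∀ γ : Cardinal.{u + 1}, γ < μ → γ ^ (Cardinal.aleph 0) < μ)
    (A : Set (KCond.{u} lam)) (hA : Cardinal.mk A = μ) :
    ∃ B ⊆ A, Cardinal.mk B = μ ∧
      ∀ p ∈ B, ∀ q ∈ B, ∃ r : KCond lam, r.le p ∧ r.le q :=
  KCond.knaster_general lam μ hreg hμ₁ hμ₂ A hA
end
end

section
/- Let λ < κ be uncountable ordinals. The map π : K_κ → K_λ given by π(T_q, f_q) = (T_q, f_q ↾ λ) is a projection: it is order-preserving, maps the maximal element to the maximal element, and for every q ∈ K_κ and every r ∈ K_λ with r ≤ π(q), there exists r' ≤ q in K_κ with π(r') ≤ r. -/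
noncomputable section

universe u

open Cardinal Ordinal Set

/-- The order on `K_λ` with the maximal element `1 = (∅, ∅)` adjoined (coded by `none`). -/
def KOptLe {lam : Ordinal.{u}} : Option (KCond.{u} lam) → Option (KCond.{u} lam) → Prop
  | _, none => True
  | none, some _ => False
  | some a, some b => KCond.le a b

/-- The restriction map `π(T_q, f_q) = (T_q, f_q ↾ λ)` from `K_κ` to `K_λ`. -/
def KCond.proj {kap : Ordinal.{u}} (lam : Ordinal.{u}) (q : KCond.{u} kap) :
    KCond.{u} lam where
  η := q.η
  η_lt := q.η_lt
  T := q.T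
  T_le := q.T_le
  T_closed := q.T_closed
  T_card := q.T_card
  T_normal := q.T_normal
  T_splitting := q.T_splitting
  f := fun a => if a < lam then q.f a else none
  f_dom := by
    refine q.f_dom.mono ?_
    intro a ha
    simp only [Set.mem_setOf_eq] at ha ⊢
    by_cases h : a < lam
    · rw [if_pos h] at ha; exact ha
    · exact absurd (if_neg h) ha
  f_spec := by
    intro a n h
    try simp only at h
    by_cases ha : a < lam
    · rw [if_pos ha] at h
      exact ⟨ha, (q.f_spec a n h).2.1, (q.f_spec a n h).2.2⟩
    · rw [if_neg ha] at h; exact absurd h (by simp)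

/-- The restriction map extended to the forcings with the maximal element adjoined. -/
def KOptProj {kap : Ordinal.{u}} (lam : Ordinal.{u}) :
    Option (KCond.{u} kap) → Option (KCond.{u} lam) :=
  Option.map (KCond.proj lam)

/-!
Given `r ≤ π(q)`, the witness `r'` keeps the tree of `r` and the values of `r` below `λ`.
A value `q(α)` with `α ≥ λ` is a node at level `η_q` of `T_q = T_r ∩ ^{≤η_q}ω₁`; normality of
`T_r` extends it to a node at the top level `η_r`, which becomes `r'(α)`. Then `r' ≤ q` and
`π(r') = r`.
-/

protected theorem KNode.le_refl_s9 (s : KNode.{u}) : s.le s := ⟨le_rfl, fun _ _ => rfl⟩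

namespace KCond

variable {lam kap : Ordinal.{u}}

theorem lt_of_f_eq_some (q : KCond.{u} lam) {a : Ordinal.{u}} {n : KNode.{u}}
    (h : q.f a = some n) : a < lam :=
  (q.f_spec a n h).1

theorem mem_T_of_le {q₁ q₀ : KCond.{u} lam} (h : q₁.le q₀) {s : KNode.{u}} (hs : s ∈ q₀.T) :
    s ∈ q₁.T := by
  rw [← h.2.1] at hs
  exact hs.1

theorem le_of_f_le {q₁ q₀ : KCond.{u} lam} (hη : q₀.η ≤ q₁.η)
    (hT : {s ∈ q₁.T | s.len ≤ q₀.η} = q₀.T)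
    (hf : ∀ a n, q₀.f a = some n → ∃ m, q₁.f a = some m ∧ n.le m) : q₁.le q₀ := by
  refine ⟨hη, hT, fun a ha => ?_, hf⟩
  obtain ⟨n, hn⟩ := Option.ne_none_iff_exists'.mp ha
  obtain ⟨m, hm, -⟩ := hf a n hn
  simp [hm]

theorem le_of_T_eq {q₁ q₀ : KCond.{u} lam} (hη : q₁.η = q₀.η) (hT : q₁.T = q₀.T)
    (hf : ∀ a n, q₀.f a = some n → q₁.f a = some n) : q₁.le q₀ := by
  refine le_of_f_le hη.ge ?_ fun a n hn => ⟨n, hf a n hn, n.le_refl_s9⟩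
  ext s
  rw [Set.mem_sep_iff, hT, ← hη]
  exact ⟨And.left, fun hs => ⟨hs, q₁.T_le s (hT ▸ hs)⟩⟩

protected theorem le_refl_s9 (q : KCond.{u} lam) : q.le q :=
  le_of_T_eq rfl rfl fun _ _ h => h

theorem proj_f_of_lt (q : KCond.{u} kap) {a : Ordinal.{u}} (ha : a < lam) :
    (q.proj lam).f a = q.f a :=
  if_pos ha

theorem proj_mono {q₁ q₀ : KCond.{u} kap} (h : q₁.le q₀) : (q₁.proj lam).le (q₀.proj lam) := by
  refine le_of_f_le h.1 h.2.1 fun a n hn => ?_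
  have ha : a < lam := (q₀.proj lam).lt_of_f_eq_some hn
  rw [proj_f_of_lt _ ha] at hn ⊢
  exact h.2.2.2 a n hn

def lift (hlk : lam ≤ kap) (r : KCond.{u} lam) : KCond.{u} kap :=
  { r with f_spec := fun a n h => ⟨(r.lt_of_f_eq_some h).trans_le hlk, (r.f_spec a n h).2⟩ }

theorem proj_lift_le (hlk : lam ≤ kap) (r : KCond.{u} lam) : ((r.lift hlk).proj lam).le r :=
  le_of_T_eq rfl rfl fun _ _ hn => (proj_f_of_lt _ (r.lt_of_f_eq_some hn)).trans hn

open Classical in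
def topExtension (r : KCond.{u} lam) (n : KNode.{u}) : KNode.{u} :=
  if h : n ∈ r.T ∧ n.len ≤ r.η then Classical.choose (r.T_normal n h.1 r.η h.2 le_rfl) else n

theorem topExtension_spec (r : KCond.{u} lam) {n : KNode.{u}} (hn : n ∈ r.T)
    (hlen : n.len ≤ r.η) :
    r.topExtension n ∈ r.T ∧ n.le (r.topExtension n) ∧ (r.topExtension n).len = r.η := by
  rw [topExtension, dif_pos ⟨hn, hlen⟩]
  exact Classical.choose_spec (r.T_normal n hn r.η hlen le_rfl)

theorem mem_T_of_le_proj {q : KCond.{u} kap} {r : KCond.{u} lam} (h : r.le (q.proj lam))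
    {a : Ordinal.{u}} {n : KNode.{u}} (hn : q.f a = some n) : n ∈ r.T ∧ n.len ≤ r.η := by
  obtain ⟨-, hnT, hlen⟩ := q.f_spec a n hn
  exact ⟨mem_T_of_le h hnT, hlen.trans_le h.1⟩

def mix (hlk : lam ≤ kap) {q : KCond.{u} kap} {r : KCond.{u} lam} (h : r.le (q.proj lam)) :
    KCond.{u} kap :=
  { r.lift hlk with
    f := fun a => if a < lam then r.f a else (q.f a).map r.topExtension
    f_dom := by
      refine (r.f_dom.union q.f_dom).mono fun a ha => ?_
      by_cases hal : a < lam
      · exact Or.inl (by simpa [hal] using ha)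
      · exact Or.inr (by simpa [hal] using ha)
    f_spec := fun a m hm => by
      by_cases hal : a < lam
      · rw [if_pos hal] at hm
        exact (r.lift hlk).f_spec a m hm
      · rw [if_neg hal, Option.map_eq_some_iff] at hm
        obtain ⟨n, hn, rfl⟩ := hm
        obtain ⟨hnT, hlen⟩ := mem_T_of_le_proj h hn
        obtain ⟨hmT, -, hmlen⟩ := r.topExtension_spec hnT hlen
        exact ⟨(q.f_spec a n hn).1, hmT, hmlen⟩ }

theorem mix_le (hlk : lam ≤ kap) {q : KCond.{u} kap} {r : KCond.{u} lam}
    (h : r.le (q.proj lam)) : (mix hlk h).le q := by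
  refine le_of_f_le h.1 h.2.1 fun a n hn => ?_
  by_cases hal : a < lam
  · rw [← proj_f_of_lt q hal] at hn
    obtain ⟨m, hm, hnm⟩ := h.2.2.2 a n hn
    exact ⟨m, (if_pos hal).trans hm, hnm⟩
  · obtain ⟨hnT, hlen⟩ := mem_T_of_le_proj h hn
    refine ⟨r.topExtension n, ?_, (r.topExtension_spec hnT hlen).2.1⟩
    simp only [mix, if_neg hal, hn, Option.map_some]

theorem proj_mix_le (hlk : lam ≤ kap) {q : KCond.{u} kap} {r : KCond.{u} lam}
    (h : r.le (q.proj lam)) : ((mix hlk h).proj lam).le r :=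
  le_of_T_eq rfl rfl fun _ _ hn => by
    have hal := r.lt_of_f_eq_some hn
    rw [proj_f_of_lt _ hal]
    exact (if_pos hal).trans hn

end KCond

theorem KOptLe.refl {lam : Ordinal.{u}} : ∀ q : Option (KCond.{u} lam), KOptLe q q
  | none => trivial
  | some q => q.le_refl_s9

theorem KCond.proj_is_projection_general (lam kap : Ordinal.{u}) (hlk : lam < kap) :
    (∀ a b : Option (KCond.{u} kap), KOptLe a b → KOptLe (KOptProj lam a) (KOptProj lam b)) ∧
    (KOptProj lam (none : Option (KCond.{u} kap)) = none) ∧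
    (∀ (q : Option (KCond.{u} kap)) (r : Option (KCond.{u} lam)),
      KOptLe r (KOptProj lam q) →
        ∃ r' : Option (KCond.{u} kap), KOptLe r' q ∧ KOptLe (KOptProj lam r') r) := by
  refine ⟨?_, rfl, ?_⟩
  · rintro (_ | a) (_ | b) h
    · trivial
    · exact h.elim
    · trivial
    · exact proj_mono h
  · rintro q (_ | r) hr
    · exact ⟨q, KOptLe.refl q, trivial⟩
    · rcases q with _ | q
      · exact ⟨some (r.lift hlk.le), trivial, r.proj_lift_le hlk.le⟩
      · exact ⟨some (mix hlk.le hr), mix_le hlk.le hr, proj_mix_le hlk.le hr⟩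

/-- For uncountable ordinals `λ < κ`, the map `π(T_q, f_q) = (T_q, f_q ↾ λ)`
is a projection from `K_κ` to `K_λ`: it is order-preserving, maps the maximal element to
the maximal element, and for every `q ∈ K_κ` and `r ∈ K_λ` with `r ≤ π(q)` there exists
`r' ≤ q` with `π(r') ≤ r`. -/
theorem KCond.proj_is_projection (lam kap : Ordinal.{u})
    (hlam : omegaOne ≤ lam) (hlk : lam < kap) :
    (∀ a b : Option (KCond.{u} kap), KOptLe a b → KOptLe (KOptProj lam a) (KOptProj lam b)) ∧
    (KOptProj lam (none : Option (KCond.{u} kap)) = none) ∧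
    (∀ (q : Option (KCond.{u} kap)) (r : Option (KCond.{u} lam)),
      KOptLe r (KOptProj lam q) →
        ∃ r' : Option (KCond.{u} kap), KOptLe r' q ∧ KOptLe (KOptProj lam r') r) :=
  KCond.proj_is_projection_general lam kap hlk
end
end

section
/- Suppose V ⊆ W are models of ZFC, T ∈ V is a tree of height μ for a regular uncountable cardinal μ of W, the pair (V, W) satisfies the μ-approximation property, and every level of T has size less than some cardinal θ of V with θ ≤ μ. Then every cofinal branch of T lying in W already lies in V. (In particular, if a forcing P has the ω₁-approximation property, then P adds no new cofinal branches to trees of height ω₁ whose branches' initial segments lie in V.) -/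
/-!
By the approximation property it suffices to show `b ∩ z ∈ V` for every `z ∈ V` of size `< μ`.
By regularity of `μ` the heights of the nodes of `z` are bounded by some `α < μ`; if `t` is the
node of `b` on level `α`, then `b ∩ z` is the cone below `t` intersected with `z`, which lies in `V`.
-/

noncomputable section

open Cardinal Ordinal Set

theorem Cardinal.IsRegular.exists_lt_ord_forall_lt {μ : Cardinal.{u}} (hμ : μ.IsRegular)
    {ι : Type u} (f : ι → Ordinal.{u}) (hι : #ι < μ) (hf : ∀ i, f i < μ.ord) :
    ∃ α < μ.ord, ∀ i, f i < α :=
  ⟨⨆ i, f i + 1, iSup_add_one_lt_of_lt_cof (by rwa [hμ.cof_ord]) hf, lt_iSup_add_one f⟩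

section Tree

variable {T : Type*} [PartialOrder T]
  (hwo : ∀ t : T, IsWellOrder {s : T // s < t} (fun a b => (a : T) < (b : T)))

theorem treeHt_lt_treeHt {s t : T} (h : s < t) : treeHt hwo s < treeHt hwo t := by
  let _ := hwo t
  have hs : treeHt hwo s =
      @typein {r : T // r < t} (fun a b => (a : T) < (b : T)) (hwo t) ⟨s, h⟩ := by
    rw [← type_subrel]
    exact type_eq.2 ⟨⟨⟨fun r => ⟨⟨r.1, r.2.trans h⟩, r.2⟩, fun r => ⟨r.1.1, r.2⟩,
      fun _ => rfl, fun _ => rfl⟩, Iff.rfl⟩⟩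
  rw [hs]
  exact typein_lt_type _ _

theorem IsChain.le_of_treeHt_lt {b : Set T} (hb : IsChain (· ≤ ·) b) {s t : T}
    (hs : s ∈ b) (ht : t ∈ b) (hst : treeHt hwo s < treeHt hwo t) : s ≤ t := by
  rcases eq_or_ne s t with rfl | hne
  · exact le_rfl
  · exact (hb hs ht hne).resolve_right fun hts =>
      lt_asymm hst (treeHt_lt_treeHt hwo (hts.lt_of_ne hne.symm))

theorem inter_eq_Iic_inter_of_forall_treeHt_lt {b z : Set T} (hb : IsChain (· ≤ ·) b)
    (hlow : IsLowerSet b) {t : T} (ht : t ∈ b) (hz : ∀ s ∈ z, treeHt hwo s < treeHt hwo t) :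
    b ∩ z = Iic t ∩ z := by
  ext s
  constructor
  · rintro ⟨hsb, hsz⟩
    exact ⟨hb.le_of_treeHt_lt hwo hsb ht (hz s hsz), hsz⟩
  · rintro ⟨hst, hsz⟩
    exact ⟨hlow hst ht, hsz⟩

end Tree

theorem branch_in_ground_model_of_approximation_general {T : Type*} [PartialOrder T]
    (hwo : ∀ t : T, IsWellOrder {s : T // s < t} (fun a b => (a : T) < (b : T)))
    (μ : Cardinal) (hμreg : μ.IsRegular)
    -- `T` has height `μ`:
    (hht : ∀ t : T, treeHt hwo t < μ.ord)
    (InV : Set T → Prop)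
    -- `V` is closed under intersections:
    (hV_inter : ∀ a b : Set T, InV a → InV b → InV (a ∩ b))
    -- `T ∈ V`: the set of predecessors (with the node) of any node lies in `V`:
    (hV_pred : ∀ t : T, InV {s : T | s ≤ t})
    -- the `μ`-approximation property for the pair `(V, W)`:
    (happrox : ∀ x : Set T,
      (∀ z : Set T, InV z → Cardinal.mk z < μ → InV (x ∩ z)) → InV x)
    -- `b` is a cofinal branch of `T` (in `W`):
    (b : Set T) (hchain : IsChain (· ≤ ·) b)
    (hdc : ∀ t ∈ b, ∀ s : T, s ≤ t → s ∈ b)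
    (hcof : ∀ α < μ.ord, ∃ t ∈ b, treeHt hwo t = α) :
    InV b := by
  refine happrox b fun z hz hzμ => ?_
  obtain ⟨α, hαμ, hzα⟩ :=
    hμreg.exists_lt_ord_forall_lt (fun s : z => treeHt hwo s) hzμ fun s => hht s
  obtain ⟨t, htb, rfl⟩ := hcof α hαμ
  rw [inter_eq_Iic_inter_of_forall_treeHt_lt hwo hchain (fun _ _ hst ht => hdc _ ht _ hst) htb
    fun s hs => hzα ⟨s, hs⟩]
  exact hV_inter _ _ (hV_pred t) hz

/-- Suppose `V ⊆ W` are models of ZFC, `T ∈ V` is a tree of height `μ`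
for a regular uncountable cardinal `μ`, the pair `(V, W)` has the `μ`-approximation
property, and every level of `T` has size `< θ` for some cardinal `θ ≤ μ`.  Then every
cofinal branch of `T` lying in `W` already lies in `V`.  Here the inner model `V` is
abstracted by a predicate `InV` on subsets of `T` (`InV x` meaning `x ∈ V`), closed
under intersections and containing the cones of predecessors of nodes (this captures
`T ∈ V`), and the `μ`-approximation property is the hypothesis `happrox`. -/
theorem branch_in_ground_model_of_approximation {T : Type*} [PartialOrder T]
    (hwo : ∀ t : T, IsWellOrder {s : T // s < t} (fun a b => (a : T) < (b : T)))
    (μ θ : Cardinal) (hμreg : μ.IsRegular) (hμunc : Cardinal.aleph0 < μ)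
    (hθμ : θ ≤ μ)
    -- `T` has height `μ`:
    (hht : ∀ t : T, treeHt hwo t < μ.ord)
    -- every level of `T` has size less than `θ`:
    (hlevel : ∀ α : Ordinal, Cardinal.mk {t : T | treeHt hwo t = α} < θ)
    (InV : Set T → Prop)
    -- `V` is closed under intersections:
    (hV_inter : ∀ a b : Set T, InV a → InV b → InV (a ∩ b))
    -- `T ∈ V`: the set of predecessors (with the node) of any node lies in `V`:
    (hV_pred : ∀ t : T, InV {s : T | s ≤ t})
    -- the `μ`-approximation property for the pair `(V, W)`:
    (happrox : ∀ x : Set T,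
      (∀ z : Set T, InV z → Cardinal.mk z < μ → InV (x ∩ z)) → InV x)
    -- `b` is a cofinal branch of `T` (in `W`):
    (b : Set T) (hchain : IsChain (· ≤ ·) b)
    (hdc : ∀ t ∈ b, ∀ s : T, s ≤ t → s ∈ b)
    (hcof : ∀ α < μ.ord, ∃ t ∈ b, treeHt hwo t = α) :
    InV b :=
  branch_in_ground_model_of_approximation_general hwo μ hμreg hht InV hV_inter hV_pred happrox b
    hchain hdc hcof
end
end
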